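/- Let D be a linearly connected digraph with exactly two strong components D_1 and D_2, both nontrivial. Fix i ∈ ZMod κ_1 and j ∈ ZMod κ_2. Then (i, j) is an edge of the bipartite graph B_{1,2} if and only if there exist vertices u ∈ U_i^{(1)} and v ∈ U_j^{(2)} and a positive integer s such that D has a directed (u,v)-walk of length 2sκ_1κ_2. -/

import Mathlib

/-!
For `⇒`, extend an arc `x₀ → y₀` realising `(k, l) ∈ I(D_{1,2})` backwards inside `D₁` and
forwards inside `D₂`. In a strong component of index `κ` the lengths of the closed walks at a
vertex form an additive monoid with gcd `κ`, so they contain every large multiple of `κ`;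
hence two vertices of the component are joined by walks of every large length in the residue
class modulo `κ` fixed by their labels, and both ends can be lengthened until the total is
`2sκ₁κ₂`. For `⇐`, a walk from `V₁` to `V₂` crosses exactly one arc from `V₁` to `V₂`;
labels increase by one along the other arcs, and `κ₁` divides the length.
-/

/-- A digraph: a finite vertex type with an irreflexive arc relation (no loops). -/
structure Digraph' (V : Type*) where
  Adj : V → V → Prop
  irrefl : ∀ v, ¬ Adj v v

namespace Digraph'

variable {V : Type*}

/-- There is a directed walk of length `m` from `x` to `y` in `D`;
i.e. `y` is an `m`-step prey of `x`. -/
def HasWalk (D : Digraph' V) (m : ℕ) (x y : V) : Prop :=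
  ∃ f : ℕ → V, f 0 = x ∧ f m = y ∧ ∀ t, t < m → D.Adj (f t) (f (t + 1))

/-- There is a directed walk of length `m` from `x` to `y` staying inside `S`. -/
def HasWalkIn (D : Digraph' V) (S : Set V) (m : ℕ) (x y : V) : Prop :=
  ∃ f : ℕ → V, f 0 = x ∧ f m = y ∧ (∀ t, t ≤ m → f t ∈ S) ∧
    ∀ t, t < m → D.Adj (f t) (f (t + 1))

/-- The `m`-step competition graph `C(D^m)` of `D`. -/
def compGraph (D : Digraph' V) (m : ℕ) : SimpleGraph V where
  Adj u v := u ≠ v ∧ ∃ z, D.HasWalk m u z ∧ D.HasWalk m v z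
  symm := by
    constructor
    rintro u v ⟨hne, z, h1, h2⟩
    exact ⟨hne.symm, z, h2, h1⟩
  loopless := ⟨fun v h => h.1 rfl⟩

/-- The sequence `{C(D^m)}_{m ≥ 1}` converges. -/
def CompConverges (D : Digraph' V) : Prop :=
  ∃ N : ℕ, 1 ≤ N ∧ ∀ m, N ≤ m → D.compGraph m = D.compGraph N

/-- The sequence `{C(D^m)}_{m ≥ 1}` converges to the graph `G`. -/
def CompConvergesTo (D : Digraph' V) (G : SimpleGraph V) : Prop :=
  ∃ N : ℕ, 1 ≤ N ∧ ∀ m, N ≤ m → D.compGraph m = G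

/-- `D` is linearly connected with strong components `Vset 1, …, Vset η`. -/
structure IsLinConn (D : Digraph' V) (η : ℕ) (Vset : ℕ → Set V) : Prop where
  nonempty : ∀ i, 1 ≤ i → i ≤ η → (Vset i).Nonempty
  cover : ∀ v : V, ∃ i, 1 ≤ i ∧ i ≤ η ∧ v ∈ Vset i
  disjoint' : ∀ i j, 1 ≤ i → i ≤ η → 1 ≤ j → j ≤ η →
      ∀ v : V, v ∈ Vset i → v ∈ Vset j → i = j
  strong : ∀ i, 1 ≤ i → i ≤ η → ∀ x ∈ Vset i, ∀ y ∈ Vset i,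
      ∃ m, D.HasWalkIn (Vset i) m x y
  arcs : ∀ x y : V, D.Adj x y → ∃ i, 1 ≤ i ∧
      ((i ≤ η ∧ x ∈ Vset i ∧ y ∈ Vset i) ∨
       (i + 1 ≤ η ∧ x ∈ Vset i ∧ y ∈ Vset (i + 1)))
  linked : ∀ i, 1 ≤ i → i + 1 ≤ η → ∃ x ∈ Vset i, ∃ y ∈ Vset (i + 1), D.Adj x y

/-- A component with vertex set `S` is trivial if `S` is a singleton. -/
def IsTrivialComp (S : Set V) : Prop := ∃ v : V, S = {v}

/-- `κ` is the index of imprimitivity of the (strong) component with vertex set `S`: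
the gcd of the lengths of all closed directed walks inside `S`. -/
def IsImprimIndex (D : Digraph' V) (S : Set V) (κ : ℕ) : Prop :=
  (∀ (x : V) (m : ℕ), x ∈ S → 0 < m → D.HasWalkIn S m x x → κ ∣ m) ∧
  ∀ d : ℕ, (∀ (x : V) (m : ℕ), x ∈ S → 0 < m → D.HasWalkIn S m x x → d ∣ m) → d ∣ κ

/-- `u` is an imprimitivity labelling on `S`: along any arc inside `S` the label
increases by one.  Its fibers are the sets of imprimitivity. -/
def IsImprimLabelling (D : Digraph' V) (S : Set V) {κ : ℕ} (u : V → ZMod κ) : Prop :=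
  ∀ x ∈ S, ∀ y ∈ S, D.Adj x y → u y = u x + 1

/-- `(k, l) ∈ I(D_{p,p+1})`: some arc goes from a vertex of `U_k^{(p)}` to a vertex of
`U_l^{(p+1)}`. -/
def InI (D : Digraph' V) (Vset : ℕ → Set V) {κ : ℕ → ℕ}
    (u : ∀ i : ℕ, V → ZMod (κ i)) (p : ℕ) (k : ZMod (κ p)) (l : ZMod (κ (p + 1))) : Prop :=
  ∃ x ∈ Vset p, ∃ y ∈ Vset (p + 1), D.Adj x y ∧ u p x = k ∧ u (p + 1) y = l

/-- `(i, j)` is an edge of the bipartite graph `B_{p,p+1}`. -/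
def BAdj (D : Digraph' V) (Vset : ℕ → Set V) {κ : ℕ → ℕ}
    (u : ∀ i : ℕ, V → ZMod (κ i)) (p : ℕ) (i : ZMod (κ p)) (j : ZMod (κ (p + 1))) : Prop :=
  ∃ (k : ZMod (κ p)) (l : ZMod (κ (p + 1))) (a : ℤ),
    InI D Vset u p k l ∧ i = k + 1 + (a : ZMod (κ p)) ∧ j = l + (a : ZMod (κ (p + 1)))

/-- The competition skeleton graph (CS-graph) `PT_D^{(η)}`: vertices are pairs `⟨r, i⟩`
with `i ∈ ZMod (κ r)` (only `1 ≤ r ≤ η` carries edges); `⟨p, i⟩` and `⟨p+1, j⟩` are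
adjacent exactly when `i` and `j` are adjacent in `B_{p,p+1}`. -/
def csGraph (D : Digraph' V) (Vset : ℕ → Set V) {κ : ℕ → ℕ}
    (u : ∀ i : ℕ, V → ZMod (κ i)) (η : ℕ) : SimpleGraph ((r : ℕ) × ZMod (κ r)) where
  Adj a b := ∃ p, 1 ≤ p ∧ p + 1 ≤ η ∧ ∃ (i : ZMod (κ p)) (j : ZMod (κ (p + 1))),
    BAdj D Vset u p i j ∧
    ((a = ⟨p, i⟩ ∧ b = ⟨p + 1, j⟩) ∨ (a = ⟨p + 1, j⟩ ∧ b = ⟨p, i⟩))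
  symm := by
    constructor
    rintro a b ⟨p, h1, h2, i, j, hB, hab⟩
    exact ⟨p, h1, h2, i, j, hB,
      hab.elim (fun h => Or.inr ⟨h.2, h.1⟩) (fun h => Or.inl ⟨h.2, h.1⟩)⟩
  loopless := by
    constructor
    rintro a ⟨p, _, _, i, j, _, hab⟩
    rcases hab with ⟨ha, hb⟩ | ⟨ha, hb⟩
    · have h : p = p + 1 := congrArg Sigma.fst (ha.symm.trans hb)
      omega
    · have h : p + 1 = p := congrArg Sigma.fst (ha.symm.trans hb)
      omega

end Digraph'

namespace Digraph'

variable {V : Type*} {D : Digraph' V} {S T : Set V} {m n : ℕ} {x y z : V}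

def StronglyConnectedOn (D : Digraph' V) (S : Set V) : Prop :=
  ∀ x ∈ S, ∀ y ∈ S, ∃ m, D.HasWalkIn S m x y

def closedWalkLengths (D : Digraph' V) (S : Set V) (v : V) : Set ℕ :=
  {m | D.HasWalkIn S m v v}

theorem hasWalkIn_zero (hx : x ∈ S) : D.HasWalkIn S 0 x x :=
  ⟨fun _ => x, rfl, rfl, fun _ _ => hx, fun _ h => absurd h (Nat.not_lt_zero _)⟩

theorem HasWalkIn.left_mem (h : D.HasWalkIn S m x y) : x ∈ S := by
  obtain ⟨f, rfl, -, hS, -⟩ := h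
  exact hS 0 (Nat.zero_le _)

theorem HasWalkIn.right_mem (h : D.HasWalkIn S m x y) : y ∈ S := by
  obtain ⟨f, -, rfl, hS, -⟩ := h
  exact hS m le_rfl

theorem HasWalkIn.hasWalk (h : D.HasWalkIn S m x y) : D.HasWalk m x y :=
  let ⟨f, h0, hm, _, hA⟩ := h
  ⟨f, h0, hm, hA⟩

theorem hasWalkIn_univ_iff : D.HasWalkIn Set.univ m x y ↔ D.HasWalk m x y :=
  ⟨HasWalkIn.hasWalk, fun ⟨f, h0, hm, hA⟩ => ⟨f, h0, hm, fun _ _ => Set.mem_univ _, hA⟩⟩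

theorem HasWalkIn.append (h₁ : D.HasWalkIn S m x y) (h₂ : D.HasWalkIn S n y z) :
    D.HasWalkIn S (m + n) x z := by
  obtain ⟨f, rfl, rfl, hfS, hfA⟩ := h₁
  obtain ⟨g, hg0, rfl, hgS, hgA⟩ := h₂
  refine ⟨fun t => if t ≤ m then f t else g (t - m), by simp, ?_, fun t ht => ?_, fun t ht => ?_⟩
  · rcases n.eq_zero_or_pos with rfl | hn
    · simp [hg0]
    · simp [show ¬ m + n ≤ m by omega]
  · dsimp only
    split_ifs with htm
    · exact hfS t htm
    · exact hgS (t - m) (by omega)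
  · dsimp only
    split_ifs with h1 h2 h2
    · exact hfA t (by omega)
    · obtain rfl : t = m := by omega
      rw [← hg0, show t + 1 - t = 0 + 1 by omega]
      exact hgA 0 (by omega)
    · omega
    · rw [show t + 1 - m = t - m + 1 by omega]
      exact hgA (t - m) (by omega)

theorem HasWalk.append (h₁ : D.HasWalk m x y) (h₂ : D.HasWalk n y z) : D.HasWalk (m + n) x z :=
  hasWalkIn_univ_iff.mp ((hasWalkIn_univ_iff.mpr h₁).append (hasWalkIn_univ_iff.mpr h₂))

theorem Adj.hasWalk (h : D.Adj x y) : D.HasWalk 1 x y :=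
  ⟨fun t => if t = 0 then x else y, rfl, rfl, fun t ht => by simpa [Nat.lt_one_iff.mp ht] using h⟩

theorem HasWalkIn.exists_prefix (h : D.HasWalkIn S m x y) (hn : n ≤ m) :
    ∃ z, D.HasWalkIn S n x z :=
  let ⟨f, h0, _, hS, hA⟩ := h
  ⟨f n, f, h0, rfl, fun t ht => hS t (by omega), fun t ht => hA t (by omega)⟩

/-- The walk leaves `S` for `T` at the first vertex in `T`, and cannot come back since `T` has
no outgoing arcs. -/
theorem HasWalk.exists_crossing (hcover : ∀ w, w ∈ S ∨ w ∈ T)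
    (hT : ∀ w z, D.Adj w z → w ∈ T → z ∈ T) (hx : x ∉ T) (hy : y ∈ T) (h : D.HasWalk m x y) :
    ∃ p q x₀ y₀, p + 1 + q = m ∧ D.HasWalkIn S p x x₀ ∧ D.Adj x₀ y₀ ∧ D.HasWalkIn T q y₀ y := by
  classical
  obtain ⟨f, rfl, rfl, hA⟩ := h
  have hex : ∃ t, f t ∈ T := ⟨m, hy⟩
  set c := Nat.find hex
  have hcm : c ≤ m := Nat.find_min' hex hy
  have hc0 : c ≠ 0 := fun h => hx (h ▸ Nat.find_spec hex)
  have hbefore : ∀ t < c, f t ∈ S := fun t ht =>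
    (hcover (f t)).resolve_right (Nat.find_min hex ht)
  have hafter : ∀ t, c ≤ t → t ≤ m → f t ∈ T := by
    intro t hct
    induction t, hct using Nat.le_induction with
    | base => exact fun _ => Nat.find_spec hex
    | succ t _ ih => exact fun htm => hT _ _ (hA t (by omega)) (ih (by omega))
  refine ⟨c - 1, m - c, f (c - 1), f c, by omega,
    ⟨f, rfl, rfl, fun t ht => hbefore t (by omega), fun t ht => hA t (by omega)⟩, ?_,
    ⟨fun t => f (c + t), rfl, by simp only [Nat.add_sub_cancel' hcm],
      fun t ht => hafter _ (by omega) (by omega), fun t ht => hA (c + t) (by omega)⟩⟩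
  simpa only [Nat.sub_add_cancel (Nat.one_le_iff_ne_zero.mpr hc0)] using hA (c - 1) (by omega)

section Imprimitivity

variable {κ : ℕ} {u : V → ZMod κ} {v : V}

theorem IsImprimLabelling.eq_add_of_hasWalkIn (hu : D.IsImprimLabelling S u)
    (h : D.HasWalkIn S m x y) : u y = u x + m := by
  obtain ⟨f, rfl, rfl, hS, hA⟩ := h
  induction m with
  | zero => simp
  | succ n ih =>
    rw [hu _ (hS n (by omega)) _ (hS (n + 1) le_rfl) (hA n (by omega)),
      ih (fun t ht => hS t (by omega)) (fun t ht => hA t (by omega))]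
    push_cast
    ring

theorem mem_closedWalkLengths_of_mem_closure (hv : v ∈ S)
    (h : m ∈ AddSubmonoid.closure (D.closedWalkLengths S v)) : m ∈ D.closedWalkLengths S v :=
  AddSubmonoid.closure_induction (fun _ hm => hm) (hasWalkIn_zero hv)
    (fun _ _ _ _ h₁ h₂ => HasWalkIn.append h₁ h₂) h

theorem IsImprimIndex.setGcd_closedWalkLengths (hS : D.StronglyConnectedOn S)
    (hκ : D.IsImprimIndex S κ) (hv : v ∈ S) : Nat.setGcd (D.closedWalkLengths S v) = κ := by
  refine Nat.dvd_antisymm (hκ.2 _ fun z m hz _ hw => ?_) (Nat.dvd_setGcd_iff.mpr fun m hm => ?_)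
  · obtain ⟨p, hp⟩ := hS v hv z hz
    obtain ⟨q, hq⟩ := hS z hz v hv
    have hpq : Nat.setGcd (D.closedWalkLengths S v) ∣ p + q :=
      Nat.setGcd_dvd_of_mem (hp.append hq)
    have hpmq : Nat.setGcd (D.closedWalkLengths S v) ∣ p + q + m :=
      Nat.setGcd_dvd_of_mem (by rw [add_right_comm]; exact (hp.append hw).append hq)
    exact (Nat.dvd_add_right hpq).mp hpmq
  · rcases m.eq_zero_or_pos with rfl | hm0
    · exact dvd_zero κ
    · exact hκ.1 v m hv hm0 hm

theorem IsImprimIndex.exists_hasWalkIn_self_of_ge (hS : D.StronglyConnectedOn S)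
    (hκ : D.IsImprimIndex S κ) (hv : v ∈ S) :
    ∃ N, ∀ m ≥ N, κ ∣ m → D.HasWalkIn S m v v := by
  obtain ⟨N, hN⟩ := Nat.exists_mem_closure_of_ge (D.closedWalkLengths S v)
  rw [hκ.setGcd_closedWalkLengths hS hv] at hN
  exact ⟨N, fun m hm hκm => mem_closedWalkLengths_of_mem_closure hv (hN m hm hκm)⟩

theorem IsImprimIndex.exists_hasWalkIn_of_ge (hS : D.StronglyConnectedOn S)
    (hκ : D.IsImprimIndex S κ) (hu : D.IsImprimLabelling S u) (hx : x ∈ S) (hy : y ∈ S) :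
    ∃ N, ∀ m ≥ N, ((m : ℕ) : ZMod κ) = u y - u x → D.HasWalkIn S m x y := by
  obtain ⟨c, hc⟩ := hS x hx y hy
  obtain ⟨N, hN⟩ := hκ.exists_hasWalkIn_self_of_ge hS hx
  refine ⟨N + c, fun m hm hmod => ?_⟩
  have hcm : (c : ZMod κ) = m := by rw [hmod, hu.eq_add_of_hasWalkIn hc, add_sub_cancel_left]
  have hκ_dvd : κ ∣ m - c := (Nat.modEq_iff_dvd' (by omega)).mp
    ((ZMod.natCast_eq_natCast_iff c m κ).mp hcm)
  simpa only [Nat.sub_add_cancel (show c ≤ m by omega)] using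
    (hN (m - c) (by omega) hκ_dvd).append hc

theorem StronglyConnectedOn.exists_pos_hasWalkIn_self (hS : D.StronglyConnectedOn S)
    (hnt : ¬ IsTrivialComp S) (hv : v ∈ S) : ∃ m, 0 < m ∧ D.HasWalkIn S m v v := by
  obtain ⟨z, hzS, hzv⟩ : ∃ z ∈ S, z ≠ v := by
    by_contra! h
    exact hnt ⟨v, Set.eq_singleton_iff_unique_mem.mpr ⟨hv, h⟩⟩
  obtain ⟨p, hp⟩ := hS v hv z hzS
  obtain ⟨q, hq⟩ := hS z hzS v hv
  refine ⟨p + q, Nat.add_pos_left (Nat.pos_of_ne_zero fun hp0 => hzv ?_) q, hp.append hq⟩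
  obtain ⟨f, rfl, rfl, -, -⟩ := hp
  rw [hp0]

theorem IsImprimIndex.pos (hS : D.StronglyConnectedOn S) (hnt : ¬ IsTrivialComp S)
    (hκ : D.IsImprimIndex S κ) (hv : v ∈ S) : 0 < κ := by
  obtain ⟨m, hm, hw⟩ := hS.exists_pos_hasWalkIn_self hnt hv
  exact Nat.pos_of_dvd_of_pos (hκ.1 v m hv hm hw) hm

theorem IsImprimLabelling.exists_eq (hS : D.StronglyConnectedOn S) (hnt : ¬ IsTrivialComp S)
    (hκ : D.IsImprimIndex S κ) (hu : D.IsImprimLabelling S u) (hv : v ∈ S) (i : ZMod κ) :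
    ∃ x ∈ S, u x = i := by
  obtain ⟨m, hm, hw⟩ := hS.exists_pos_hasWalkIn_self hnt hv
  have : NeZero κ := ⟨(hκ.pos hS hnt hv).ne'⟩
  have hlt : (i - u v).val < m :=
    (ZMod.val_lt _).trans_le (Nat.le_of_dvd hm (hκ.1 v m hv hm hw))
  obtain ⟨z, hz⟩ := hw.exists_prefix hlt.le
  refine ⟨z, hz.right_mem, ?_⟩
  rw [hu.eq_add_of_hasWalkIn hz, ZMod.natCast_zmod_val, add_sub_cancel]

end Imprimitivity

/-- Choose `L₂ ≡ a` modulo `κ₁κ₂`, and then `L₁ = 2sκ₁κ₂ - 1 - L₂` for a large `s`. -/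
theorem exists_lengths_add_one_add_eq {κ₁ κ₂ : ℕ} (h₁ : 0 < κ₁) (h₂ : 0 < κ₂) (a : ℤ)
    (N₁ N₂ : ℕ) :
    ∃ s L₁ L₂ : ℕ, 1 ≤ s ∧ N₁ ≤ L₁ ∧ N₂ ≤ L₂ ∧ L₁ + 1 + L₂ = 2 * s * κ₁ * κ₂ ∧
      (L₁ : ZMod κ₁) = -1 - a ∧ (L₂ : ZMod κ₂) = a := by
  have hn : 1 ≤ κ₁ * κ₂ := Nat.mul_pos h₁ h₂
  have hm : (N₂ + a.natAbs : ℤ) ≤ (N₂ + a.natAbs) * (κ₁ * κ₂ : ℕ) :=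
    le_mul_of_one_le_right (by positivity) (by exact_mod_cast hn)
  obtain ⟨L₂, hL₂⟩ : ∃ L₂ : ℕ, (L₂ : ℤ) = a + (N₂ + a.natAbs) * (κ₁ * κ₂ : ℕ) :=
    ⟨_, Int.toNat_of_nonneg (by omega)⟩
  set s := N₁ + L₂ + 1
  obtain ⟨P, hP⟩ : ∃ P, 2 * s * κ₁ * κ₂ = P := ⟨_, rfl⟩
  have hsP : 2 * s ≤ P := hP ▸ by rw [mul_assoc]; exact Nat.le_mul_of_pos_right _ hn
  have hP₁ : (P : ZMod κ₁) = 0 :=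
    (ZMod.natCast_eq_zero_iff _ _).mpr ⟨2 * s * κ₂, by rw [← hP]; ring⟩
  have hL₁ : ((P - 1 - L₂ : ℕ) : ℤ) = P - 1 - L₂ := by omega
  refine ⟨s, P - 1 - L₂, L₂, by omega, by omega, by omega, by omega, ?_, ?_⟩
  · rw [← Int.cast_natCast, hL₁, hL₂]
    push_cast [hP₁, ZMod.natCast_self]
    ring
  · rw [← Int.cast_natCast, hL₂]
    push_cast [ZMod.natCast_self]
    ring

section Crossing

variable {κ₁ κ₂ : ℕ} {u₁ : V → ZMod κ₁} {u₂ : V → ZMod κ₂}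

theorem exists_hasWalk_of_adj (hS : D.StronglyConnectedOn S) (hT : D.StronglyConnectedOn T)
    (hSnt : ¬ IsTrivialComp S) (hTnt : ¬ IsTrivialComp T)
    (hκ₁ : D.IsImprimIndex S κ₁) (hκ₂ : D.IsImprimIndex T κ₂)
    (hu₁ : D.IsImprimLabelling S u₁) (hu₂ : D.IsImprimLabelling T u₂)
    {x₀ y₀ : V} (hx₀ : x₀ ∈ S) (hy₀ : y₀ ∈ T) (hadj : D.Adj x₀ y₀) (a : ℤ) :
    ∃ x ∈ S, u₁ x = u₁ x₀ + 1 + a ∧ ∃ y ∈ T, u₂ y = u₂ y₀ + a ∧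
      ∃ s, 1 ≤ s ∧ D.HasWalk (2 * s * κ₁ * κ₂) x y := by
  obtain ⟨x, hx, hux⟩ := hu₁.exists_eq hS hSnt hκ₁ hx₀ (u₁ x₀ + 1 + a)
  obtain ⟨y, hy, huy⟩ := hu₂.exists_eq hT hTnt hκ₂ hy₀ (u₂ y₀ + a)
  obtain ⟨N₁, hN₁⟩ := hκ₁.exists_hasWalkIn_of_ge hS hu₁ hx hx₀
  obtain ⟨N₂, hN₂⟩ := hκ₂.exists_hasWalkIn_of_ge hT hu₂ hy₀ hy
  obtain ⟨s, L₁, L₂, hs, hL₁, hL₂, hlen, hL₁mod, hL₂mod⟩ :=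
    exists_lengths_add_one_add_eq (hκ₁.pos hS hSnt hx₀) (hκ₂.pos hT hTnt hy₀) a N₁ N₂
  have hw₁ := hN₁ L₁ hL₁ (by rw [hux, hL₁mod]; ring)
  have hw₂ := hN₂ L₂ hL₂ (by rw [huy, hL₂mod]; ring)
  exact ⟨x, hx, hux, y, hy, huy, s, hs,
    hlen ▸ (hw₁.hasWalk.append hadj.hasWalk).append hw₂.hasWalk⟩

theorem exists_adj_of_hasWalk (hcover : ∀ w, w ∈ S ∨ w ∈ T)
    (hT : ∀ w z, D.Adj w z → w ∈ T → z ∈ T)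
    (hu₁ : D.IsImprimLabelling S u₁) (hu₂ : D.IsImprimLabelling T u₂)
    (hx : x ∉ T) (hy : y ∈ T) (hm : κ₁ ∣ m) (h : D.HasWalk m x y) :
    ∃ x₀ ∈ S, ∃ y₀ ∈ T, D.Adj x₀ y₀ ∧ ∃ a : ℤ, u₁ x = u₁ x₀ + 1 + a ∧ u₂ y = u₂ y₀ + a := by
  obtain ⟨p, q, x₀, y₀, rfl, hp, hadj, hq⟩ := h.exists_crossing hcover hT hx hy
  refine ⟨x₀, hp.right_mem, y₀, hq.left_mem, hadj, q, ?_, by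
    rw [hu₂.eq_add_of_hasWalkIn hq, Int.cast_natCast]⟩
  have hm₀ : ((p + 1 + q : ℕ) : ZMod κ₁) = 0 := (ZMod.natCast_eq_zero_iff _ _).mpr hm
  push_cast at hm₀
  rw [hu₁.eq_add_of_hasWalkIn hp, Int.cast_natCast]
  linear_combination -hm₀

end Crossing

section LinConn

variable {η : ℕ} {Vset : ℕ → Set V}

theorem IsLinConn.stronglyConnectedOn (hD : D.IsLinConn η Vset) {i : ℕ} (h₁ : 1 ≤ i)
    (h₂ : i ≤ η) : D.StronglyConnectedOn (Vset i) :=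
  hD.strong i h₁ h₂

theorem IsLinConn.mem_last_of_adj (hD : D.IsLinConn η Vset) (hη : 1 ≤ η) (hxy : D.Adj x y)
    (hx : x ∈ Vset η) : y ∈ Vset η := by
  obtain ⟨k, hk, ⟨hkη, hxk, hyk⟩ | ⟨hkη, hxk, -⟩⟩ := hD.arcs x y hxy
  · rwa [hD.disjoint' k η hk hkη hη le_rfl x hxk hx] at hyk
  · exact absurd (hD.disjoint' k η hk (by omega) hη le_rfl x hxk hx) (by omega)

theorem IsLinConn.mem_one_or_mem_two (hD : D.IsLinConn 2 Vset) (x : V) :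
    x ∈ Vset 1 ∨ x ∈ Vset 2 := by
  obtain ⟨k, hk₁, hk₂, hx⟩ := hD.cover x
  interval_cases k
  exacts [Or.inl hx, Or.inr hx]

theorem IsLinConn.notMem_two_of_mem_one (hD : D.IsLinConn 2 Vset) (hx : x ∈ Vset 1) :
    x ∉ Vset 2 :=
  fun hx₂ => absurd (hD.disjoint' 1 2 le_rfl one_le_two one_le_two le_rfl x hx hx₂) (by norm_num)

end LinConn

end Digraph'

open Digraph' in
theorem stmt13_general {V : Type*} (D : Digraph' V) (Vset : ℕ → Set V)
    (hD : D.IsLinConn 2 Vset)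
    (h1 : ¬ IsTrivialComp (Vset 1)) (h2 : ¬ IsTrivialComp (Vset 2))
    (κ : ℕ → ℕ) (u : ∀ i : ℕ, V → ZMod (κ i))
    (hκ : ∀ i, 1 ≤ i → i ≤ 2 → IsImprimIndex D (Vset i) (κ i))
    (hu : ∀ i, 1 ≤ i → i ≤ 2 → IsImprimLabelling D (Vset i) (u i))
    (i : ZMod (κ 1)) (j : ZMod (κ 2)) :
    BAdj D Vset u 1 i j ↔
    (∃ x ∈ Vset 1, u 1 x = i ∧ ∃ y ∈ Vset 2, u 2 y = j ∧
       ∃ s, 1 ≤ s ∧ D.HasWalk (2 * s * κ 1 * κ 2) x y) := by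
  have hu₁ := hu 1 le_rfl one_le_two
  have hu₂ := hu 2 one_le_two le_rfl
  constructor
  · rintro ⟨k, l, a, ⟨x₀, hx₀, y₀, hy₀, hadj, rfl, rfl⟩, rfl, rfl⟩
    exact exists_hasWalk_of_adj (hD.stronglyConnectedOn le_rfl one_le_two)
      (hD.stronglyConnectedOn one_le_two le_rfl) h1 h2 (hκ 1 le_rfl one_le_two)
      (hκ 2 one_le_two le_rfl) hu₁ hu₂ hx₀ hy₀ hadj a
  · rintro ⟨x, hx, rfl, y, hy, rfl, s, -, hw⟩
    obtain ⟨x₀, hx₀, y₀, hy₀, hadj, a, hxa, hya⟩ :=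
      exists_adj_of_hasWalk hD.mem_one_or_mem_two
        (fun _ _ => hD.mem_last_of_adj one_le_two) hu₁ hu₂ (hD.notMem_two_of_mem_one hx) hy
        (Dvd.intro (2 * s * κ 2) (by ring)) hw
    exact ⟨_, _, a, ⟨x₀, hx₀, y₀, hy₀, hadj, rfl, rfl⟩, hxa, hya⟩

open Digraph' in
/-- `(i,j)` is an edge of `B_{1,2}` iff some `u ∈ U_i^{(1)}`,
`v ∈ U_j^{(2)}` are joined by a directed walk of length `2sκ₁κ₂` for some `s ≥ 1`. -/
theorem stmt13 {V : Type*} [Fintype V] (D : Digraph' V) (Vset : ℕ → Set V)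
    (hD : D.IsLinConn 2 Vset)
    (h1 : ¬ IsTrivialComp (Vset 1)) (h2 : ¬ IsTrivialComp (Vset 2))
    (κ : ℕ → ℕ) (u : ∀ i : ℕ, V → ZMod (κ i))
    (hκ : ∀ i, 1 ≤ i → i ≤ 2 → IsImprimIndex D (Vset i) (κ i))
    (hu : ∀ i, 1 ≤ i → i ≤ 2 → IsImprimLabelling D (Vset i) (u i))
    (i : ZMod (κ 1)) (j : ZMod (κ 2)) :
    BAdj D Vset u 1 i j ↔
    (∃ x ∈ Vset 1, u 1 x = i ∧ ∃ y ∈ Vset 2, u 2 y = j ∧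
       ∃ s, 1 ≤ s ∧ D.HasWalk (2 * s * κ 1 * κ 2) x y) :=
  stmt13_general D Vset hD h1 h2 κ u hκ hu i j
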